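/- Let A be a self-adjoint positive definite operator with compact resolvent on H, and let 𝒜 be the thermoelastic generator with parameters m > 0, σ > 0, τ > 0 and (α, β, γ) ∈ [0,1]² × (0,1] satisfying α > (β+1)/2. Then 0 ∈ σ(𝒜): the operator 𝒜 is not surjective onto ℋ. -/

import Mathlib

open Filter Complex

noncomputable section

/-- State space element: four coefficient sequences `(u, v, θ, q)` w.r.t. the
orthonormal eigenbasis of `A`. -/
abbrev ThermoSt := (ℕ → ℂ) × (ℕ → ℂ) × (ℕ → ℂ) × (ℕ → ℂ)

/-- Summand of the squared `ℋ`-norm: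
`σ‖A^{1/2}u‖² + m‖A^{γ/2}v‖² + ‖v‖² + ‖θ‖² + τ‖q‖²` written spectrally. -/
def thermoSummand (μ : ℕ → ℝ) (m σ τ γ : ℝ) (U : ThermoSt) (n : ℕ) : ℝ :=
  σ * μ n * ‖U.1 n‖ ^ 2 + m * μ n ^ γ * ‖U.2.1 n‖ ^ 2 + ‖U.2.1 n‖ ^ 2
    + ‖U.2.2.1 n‖ ^ 2 + τ * ‖U.2.2.2 n‖ ^ 2

/-- Membership in the state space `ℋ = D(A^{1/2}) × D(A^{γ/2}) × H × H`. -/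
def thermoMemH (μ : ℕ → ℝ) (m σ τ γ : ℝ) (U : ThermoSt) : Prop :=
  Summable (thermoSummand μ m σ τ γ U)

/-- The squared `ℋ`-norm. -/
def thermoNormSq (μ : ℕ → ℝ) (m σ τ γ : ℝ) (U : ThermoSt) : ℝ :=
  ∑' n, thermoSummand μ m σ τ γ U n

/-- The `ℋ`-inner product. -/
def thermoInner (μ : ℕ → ℝ) (m σ τ γ : ℝ) (U V : ThermoSt) : ℂ :=
  ∑' n, (((σ * μ n : ℝ) : ℂ) * (starRingEnd ℂ (U.1 n)) * V.1 n
      + ((m * μ n ^ γ : ℝ) : ℂ) * (starRingEnd ℂ (U.2.1 n)) * V.2.1 n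
      + (starRingEnd ℂ (U.2.1 n)) * V.2.1 n
      + (starRingEnd ℂ (U.2.2.1 n)) * V.2.2.1 n
      + ((τ : ℝ) : ℂ) * (starRingEnd ℂ (U.2.2.2 n)) * V.2.2.2 n)

/-- The thermoelastic operator `𝒜`, acting diagonally on eigenspaces of `A`:
`𝒜(u,v,θ,q) = (v, −(I+mA^γ)⁻¹(σAu − A^αθ), −A^αv + A^{β/2}q, τ⁻¹(−q − A^{β/2}θ))`. -/
def thermoOp (μ : ℕ → ℝ) (m σ τ α β γ : ℝ) (U : ThermoSt) : ThermoSt :=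
  (U.2.1,
   fun n => -(((1 + m * μ n ^ γ : ℝ) : ℂ))⁻¹ *
      (((σ * μ n : ℝ) : ℂ) * U.1 n - ((μ n ^ α : ℝ) : ℂ) * U.2.2.1 n),
   fun n => -((μ n ^ α : ℝ) : ℂ) * U.2.1 n + ((μ n ^ (β / 2) : ℝ) : ℂ) * U.2.2.2 n,
   fun n => ((τ : ℝ) : ℂ)⁻¹ *
      (-(U.2.2.2 n) - ((μ n ^ (β / 2) : ℝ) : ℂ) * U.2.2.1 n))

/-- The (maximal) domain of `𝒜`:  `U ∈ ℋ`, `𝒜U ∈ ℋ`, `v ∈ D(A^{1/2})`,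
`σAu − A^αθ ∈ D(A^{−γ/2})`, `−A^αv + A^{β/2}q ∈ H`, `q + A^{β/2}θ ∈ H`. -/
def thermoDom (μ : ℕ → ℝ) (m σ τ α β γ : ℝ) (U : ThermoSt) : Prop :=
  thermoMemH μ m σ τ γ U ∧ thermoMemH μ m σ τ γ (thermoOp μ m σ τ α β γ U) ∧
  Summable (fun n => μ n * ‖U.2.1 n‖ ^ 2) ∧
  Summable (fun n => μ n ^ (-γ) *
    ‖((σ * μ n : ℝ) : ℂ) * U.1 n - ((μ n ^ α : ℝ) : ℂ) * U.2.2.1 n‖ ^ 2) ∧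
  Summable (fun n => ‖-((μ n ^ α : ℝ) : ℂ) * U.2.1 n + ((μ n ^ (β / 2) : ℝ) : ℂ) * U.2.2.2 n‖ ^ 2) ∧
  Summable (fun n => ‖U.2.2.2 n + ((μ n ^ (β / 2) : ℝ) : ℂ) * U.2.2.1 n‖ ^ 2)

/-! Pick a subsequence along which `μ (φ k) ≥ 2 ^ k` and let `G = (g, 0, 0, 0)` with
`g = μ ^ (β/2 - α)` on the range of `φ` and `0` elsewhere. Then `σ μ ‖g‖² = σ μ ^ (1 + β - 2α)` is
dominated by a geometric series, so `G ∈ ℋ`. But the third component of `𝒜U = G` reads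
`A^α v = A^{β/2} q` with `v = g`, forcing `q = 1` along the subsequence, which is incompatible with
`U ∈ ℋ`. -/

theorem summable_rpow_comp_of_two_pow_le {μ : ℕ → ℝ} {φ : ℕ → ℕ} (hφ : ∀ k, 2 ^ k ≤ μ (φ k))
    {p : ℝ} (hp : p < 0) : Summable fun k => μ (φ k) ^ p := by
  refine Summable.of_nonneg_of_le
    (fun k => Real.rpow_nonneg ((pow_nonneg zero_le_two k).trans (hφ k)) _)
    (fun k => ?_) (summable_geometric_of_lt_one (Real.rpow_nonneg zero_le_two p)
      (Real.rpow_lt_one_of_one_lt_of_neg one_lt_two hp))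
  calc μ (φ k) ^ p ≤ ((2 : ℝ) ^ k) ^ p := Real.rpow_le_rpow_of_nonpos (by positivity) (hφ k) hp.le
    _ = ((2 : ℝ) ^ p) ^ k := by
      rw [← Real.rpow_natCast_mul zero_le_two, mul_comm, Real.rpow_mul_natCast zero_le_two]

theorem thermoMemH_indicator_range_rpow {μ : ℕ → ℝ} {φ : ℕ → ℕ} (hφ : Function.Injective φ)
    (hμφ : ∀ k, 2 ^ k ≤ μ (φ k)) (m σ τ γ : ℝ) {p : ℝ} (hp : 1 + 2 * p < 0) :
    thermoMemH μ m σ τ γ ((Set.range φ).indicator (fun n => ((μ n ^ p : ℝ) : ℂ)), 0, 0, 0) := by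
  rw [thermoMemH, ← hφ.summable_iff fun n hn => by simp [thermoSummand, hn]]
  refine ((summable_rpow_comp_of_two_pow_le hμφ hp).mul_left σ).congr fun k => ?_
  have hpos : 0 < μ (φ k) := (by positivity : (0 : ℝ) < 2 ^ k).trans_le (hμφ k)
  simp only [Function.comp_apply, thermoSummand, Set.indicator_of_mem (Set.mem_range_self k),
    Complex.norm_real, Real.norm_eq_abs, abs_of_pos (Real.rpow_pos_of_pos hpos p), Pi.zero_apply,
    norm_zero]
  rw [Real.rpow_add hpos, Real.rpow_one, mul_comm (2 : ℝ) p, Real.rpow_mul hpos.le, Real.rpow_two]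
  ring

theorem tau_mul_norm_sq_le_thermoSummand {μ : ℕ → ℝ} {m σ : ℝ} (τ γ : ℝ) (hm : 0 ≤ m) (hσ : 0 ≤ σ)
    (U : ThermoSt) {n : ℕ} (hμ : 0 ≤ μ n) :
    τ * ‖U.2.2.2 n‖ ^ 2 ≤ thermoSummand μ m σ τ γ U n := by
  have hμγ := Real.rpow_nonneg hμ γ
  unfold thermoSummand
  nlinarith [mul_nonneg (mul_nonneg hσ hμ) (sq_nonneg ‖U.1 n‖),
    mul_nonneg (mul_nonneg hm hμγ) (sq_nonneg ‖U.2.1 n‖), sq_nonneg ‖U.2.1 n‖, sq_nonneg ‖U.2.2.1 n‖]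

theorem fourth_eq_of_thermoOp_third_eq_zero {μ : ℕ → ℝ} {m σ τ α β γ : ℝ} {U : ThermoSt} {n : ℕ}
    (hμ : 0 < μ n) (h : (thermoOp μ m σ τ α β γ U).2.2.1 n = 0) :
    U.2.2.2 n = ((μ n ^ (α - β / 2) : ℝ) : ℂ) * U.2.1 n := by
  have hb : ((μ n ^ (β / 2) : ℝ) : ℂ) ≠ 0 := by exact_mod_cast (Real.rpow_pos_of_pos hμ _).ne'
  apply mul_left_cancel₀ hb
  rw [← mul_assoc, ← Complex.ofReal_mul, ← Real.rpow_add hμ, add_sub_cancel]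
  simp only [thermoOp] at h
  linear_combination h

theorem thermoOp_not_surjective_general (μ : ℕ → ℝ) (m σ τ α β γ : ℝ)
    (hμtop : Tendsto μ atTop atTop) (hm : 0 < m) (hσ : 0 < σ) (hτ : 0 < τ)
    (hQ : (β + 1) / 2 < α) :
    ∃ G : ThermoSt, thermoMemH μ m σ τ γ G ∧
      ∀ U : ThermoSt, thermoDom μ m σ τ α β γ U → thermoOp μ m σ τ α β γ U ≠ G := by
  obtain ⟨φ, hφ, hμφ⟩ := extraction_forall_of_eventually (P := fun k n => (2 : ℝ) ^ k ≤ μ n)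
    fun k => hμtop.eventually_ge_atTop _
  have hpos : ∀ k, 0 < μ (φ k) := fun k => (by positivity : (0 : ℝ) < 2 ^ k).trans_le (hμφ k)
  set g : ℕ → ℂ := (Set.range φ).indicator fun n => ((μ n ^ (β / 2 - α) : ℝ) : ℂ)
  have hgφ : ∀ k, g (φ k) = ((μ (φ k) ^ (β / 2 - α) : ℝ) : ℂ) := fun k =>
    Set.indicator_of_mem (Set.mem_range_self k) _
  refine ⟨(g, 0, 0, 0), thermoMemH_indicator_range_rpow hφ.injective hμφ m σ τ γ (by linarith),
    fun U hU hUG => ?_⟩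
  have hq : ∀ k, U.2.2.2 (φ k) = 1 := fun k => by
    rw [fourth_eq_of_thermoOp_third_eq_zero (hpos k) (by rw [hUG]; rfl),
      show U.2.1 = g from congrArg Prod.fst hUG, hgφ,
      ← Complex.ofReal_mul, ← Real.rpow_add (hpos k)]
    simp
  have hτle : ∀ k, τ ≤ thermoSummand μ m σ τ γ U (φ k) := fun k => by
    simpa [hq k] using tau_mul_norm_sq_le_thermoSummand τ γ hm.le hσ.le U (hpos k).le
  have hlim := hU.1.tendsto_atTop_zero.comp hφ.tendsto_atTop
  linarith [ge_of_tendsto' hlim hτle]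

/-- With `m > 0` and `α > (β+1)/2`, the thermoelastic operator `𝒜`
is not surjective onto `ℋ`; hence `0 ∈ σ(𝒜)`. -/
theorem thermoOp_not_surjective (μ : ℕ → ℝ) (m σ τ α β γ : ℝ) (c : ℝ)
    (hc : 0 < c) (hμ : ∀ n, c ≤ μ n) (hμtop : Tendsto μ atTop atTop)
    (hm : 0 < m) (hσ : 0 < σ) (hτ : 0 < τ)
    (hα : α ∈ Set.Icc (0:ℝ) 1) (hβ : β ∈ Set.Icc (0:ℝ) 1) (hγ : γ ∈ Set.Ioc (0:ℝ) 1)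
    (hQ : (β + 1) / 2 < α) :
    ∃ G : ThermoSt, thermoMemH μ m σ τ γ G ∧
      ∀ U : ThermoSt, thermoDom μ m σ τ α β γ U → thermoOp μ m σ τ α β γ U ≠ G :=
  thermoOp_not_surjective_general μ m σ τ α β γ hμtop hm hσ hτ hQ
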